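/- If a valid core inequality β₀ + Σ_{j=1}^n β_j x_j + β′ y ≥ 0 is a core facet of conv(G), then it is satisfied exactly at (x^k, m(x^k)) for at least two indices k ∈ {0,…,n}, at least one of which lies in {1,…,n−1}. -/

import Mathlib

open Finset

/-- The symmetric multilinear polynomial `m(x) = ∑_{i=2}^n c_i ∑_{|J|=i} ∏_{j∈J} x_j`. -/
noncomputable def mPoly (n : ℕ) (c : ℕ → ℝ) (x : Fin n → ℝ) : ℝ :=
  ∑ i ∈ Finset.Icc 2 n, c i *
    ∑ J ∈ Finset.powersetCard i (Finset.univ : Finset (Fin n)), ∏ j ∈ J, x j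

/-- The box `X = [ℓ,u]^n`. -/
def Xbox (n : ℕ) (ℓ u : ℝ) : Set (Fin n → ℝ) :=
  {x | ∀ j, x j ∈ Set.Icc ℓ u}

/-- The graph `G = {(x,y) : x ∈ X, y = m(x)}`. -/
def Gset (n : ℕ) (ℓ u : ℝ) (c : ℕ → ℝ) : Set ((Fin n → ℝ) × ℝ) :=
  {p | p.1 ∈ Xbox n ℓ u ∧ p.2 = mPoly n c p.1}

/-- The point `x^k` whose first `k` coordinates are `u` and remaining ones are `ℓ`. -/
def xpt (n : ℕ) (ℓ u : ℝ) (k : ℕ) : Fin n → ℝ :=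
  fun j => if (j : ℕ) < k then u else ℓ

/-- `m(x^k)`. -/
noncomputable def mval (n : ℕ) (ℓ u : ℝ) (c : ℕ → ℝ) (k : ℕ) : ℝ :=
  mPoly n c (xpt n ℓ u k)

/-- `L_k(β₀,β) = β₀ + u ∑_{j=1}^k β_j + ℓ ∑_{j=k+1}^n β_j`. -/
noncomputable def Lk (n : ℕ) (ℓ u : ℝ) (β₀ : ℝ) (β : Fin n → ℝ) (k : ℕ) : ℝ :=
  β₀ + u * ∑ j ∈ Finset.univ.filter (fun j : Fin n => (j : ℕ) < k), β j
     + ℓ * ∑ j ∈ Finset.univ.filter (fun j : Fin n => k ≤ (j : ℕ)), β j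

/-- The left-hand side `β₀ + ∑_j β_j x_j + β′ y` of an inequality, at the point `p = (x,y)`. -/
noncomputable def ineqLhs (n : ℕ) (β₀ : ℝ) (β : Fin n → ℝ) (β' : ℝ)
    (p : (Fin n → ℝ) × ℝ) : ℝ :=
  β₀ + ∑ j, β j * p.1 j + β' * p.2

/-- A core inequality: `β′ ∈ {1,-1}` and nondecreasing coefficients `β₁ ≤ … ≤ βₙ`. -/
def IsCore (n : ℕ) (β : Fin n → ℝ) (β' : ℝ) : Prop :=
  (β' = 1 ∨ β' = -1) ∧ Monotone β

/-- Validity of the inequality `β₀ + ∑_j β_j x_j + β′ y ≥ 0` on `conv(G)`. -/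
def IsValid (n : ℕ) (ℓ u : ℝ) (c : ℕ → ℝ) (β₀ : ℝ) (β : Fin n → ℝ) (β' : ℝ) : Prop :=
  ∀ p ∈ convexHull ℝ (Gset n ℓ u c), 0 ≤ ineqLhs n β₀ β β' p

/-- The point `p` satisfies the inequality exactly (with equality). -/
def ExactAt (n : ℕ) (β₀ : ℝ) (β : Fin n → ℝ) (β' : ℝ) (p : (Fin n → ℝ) × ℝ) : Prop :=
  ineqLhs n β₀ β β' p = 0

/-- Facet-defining: there are `n+1` affinely independent points of `conv(G)`
satisfying the inequality exactly. -/
def IsFacet (n : ℕ) (ℓ u : ℝ) (c : ℕ → ℝ) (β₀ : ℝ) (β : Fin n → ℝ) (β' : ℝ) : Prop :=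
  ∃ pts : Fin (n + 1) → (Fin n → ℝ) × ℝ,
    AffineIndependent ℝ pts ∧
    ∀ i, pts i ∈ convexHull ℝ (Gset n ℓ u c) ∧ ExactAt n β₀ β β' (pts i)

/-- The point `(x^k, m(x^k))` of `G`. -/
noncomputable def vtx (n : ℕ) (ℓ u : ℝ) (c : ℕ → ℝ) (k : ℕ) : (Fin n → ℝ) × ℝ :=
  (xpt n ℓ u k, mval n ℓ u c k)

/-! Every point of `conv(G)` on the face `{β₀ + βᵀx + β′y = 0}` is a convex combination of tight
points `(v, m(v))` with `v` a vertex of the box, because `m` is affine in each coordinate. As `m`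
is symmetric and `β` is nondecreasing, the rearrangement inequality shows that a tight vertex
with `k` coordinates equal to `u` makes `(x^k, m(x^k))` tight too, and shares its coordinate sum
and its value of `y`. If only `x^0` and `x^n` were tight, the face would lie on a segment; if only
one `x^k` were tight, it would lie in the codimension-two affine subspace where `∑ xⱼ` and `y` are
fixed. Either way it could not contain `n + 1` affinely independent points. -/

open Function Module Set

section Convex

variable {E : Type*} [AddCommGroup E] [Module ℝ E]

theorem mem_convexHull_sep_of_apply_eq_zero (f : E →ᵃ[ℝ] ℝ) {s : Set E}
    (hf : ∀ x ∈ s, 0 ≤ f x) {p : E} (hp : p ∈ convexHull ℝ s) (hp0 : f p = 0) :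
    p ∈ convexHull ℝ {x ∈ s | f x = 0} := by
  suffices hK : convexHull ℝ s ⊆
      {x | 0 ≤ f x ∧ (f x = 0 → x ∈ convexHull ℝ {x ∈ s | f x = 0})} from (hK hp).2 hp0
  refine convexHull_min (fun x hx => ⟨hf x hx, fun hx0 => subset_convexHull ℝ _ ⟨hx, hx0⟩⟩) ?_
  rintro x ⟨hx, hxK⟩ y ⟨hy, hyK⟩ a b ha hb hab
  have hcombo : f (a • x + b • y) = a * f x + b * f y := Convex.combo_affine_apply hab
  refine ⟨hcombo ▸ by positivity, fun h0 => ?_⟩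
  rcases ha.eq_or_lt with rfl | ha
  · rw [zero_add] at hab
    simpa [hab] using hyK (by simpa [hab] using h0)
  rcases hb.eq_or_lt with rfl | hb
  · rw [add_zero] at hab
    simpa [hab] using hxK (by simpa [hab] using h0)
  have hfx : f x = 0 := by nlinarith [mul_nonneg hb.le hy]
  have hfy : f y = 0 := by nlinarith [mul_nonneg ha.le hx]
  exact convex_convexHull ℝ _ (hxK hfx) (hyK hfy) ha.le hb.le hab

theorem vectorSpan_convexHull (s : Set E) : vectorSpan ℝ (convexHull ℝ s) = vectorSpan ℝ s := by
  rw [← direction_affineSpan, affineSpan_convexHull, direction_affineSpan]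

end Convex

theorem finrank_vectorSpan_preimage_add_finrank_le {K E F : Type*} [Field K] [AddCommGroup E]
    [Module K E] [FiniteDimensional K E] [AddCommGroup F] [Module K F] (ψ : E →ₗ[K] F)
    (hψ : Surjective ψ) (y : F) :
    finrank K (vectorSpan K (ψ ⁻¹' {y})) + finrank K F ≤ finrank K E := by
  have hker : vectorSpan K (ψ ⁻¹' {y}) ≤ LinearMap.ker ψ := by
    rw [vectorSpan_def, Submodule.span_le]
    rintro _ ⟨p, hp, q, hq, rfl⟩
    simp_all
  have := ψ.finrank_range_add_finrank_ker
  rw [LinearMap.range_eq_top.mpr hψ, finrank_top] at this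
  have := Submodule.finrank_mono hker
  omega

theorem mk_mem_convexHull_image_pi {ι : Type*} [Fintype ι] [DecidableEq ι] {f : (ι → ℝ) → ℝ}
    (hf : ∀ x i, ∃ a b : ℝ, ∀ t, f (update x i t) = a + b * t) {ℓ u : ι → ℝ} {x : ι → ℝ}
    (hx : ∀ i, x i ∈ Icc (ℓ i) (u i)) :
    (x, f x) ∈ convexHull ℝ ((fun v => (v, f v)) '' univ.pi fun i => {ℓ i, u i}) := by
  suffices ∀ S : Finset ι, ∀ x : ι → ℝ, (∀ i, x i ∈ Icc (ℓ i) (u i)) →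
      (∀ i ∉ S, x i ∈ ({ℓ i, u i} : Set ℝ)) →
      (x, f x) ∈ convexHull ℝ ((fun v => (v, f v)) '' univ.pi fun i => {ℓ i, u i}) from
    this Finset.univ x hx (by simp)
  intro S
  induction S using Finset.induction_on with
  | empty => exact fun x _ hx => subset_convexHull ℝ _ ⟨x, fun i _ => hx i (by simp), rfl⟩
  | insert j S _ ih =>
    intro x hx hxS
    obtain ⟨a, b, ha, hb, hab, hxj⟩ := Icc_subset_segment (hx j)
    obtain ⟨α, β, hαβ⟩ := hf x j
    have hlu : ℓ j ≤ u j := (hx j).1.trans (hx j).2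
    have hupd : ∀ t ∈ ({ℓ j, u j} : Set ℝ), (update x j t, f (update x j t)) ∈
        convexHull ℝ ((fun v => (v, f v)) '' univ.pi fun i => {ℓ i, u i}) := by
      intro t ht
      refine ih _ (fun i => ?_) (fun i hi => ?_)
      · rcases eq_or_ne i j with rfl | hij
        · rcases ht with rfl | rfl <;> simp [hlu]
        · simpa [hij] using hx i
      · rcases eq_or_ne i j with rfl | hij
        · simpa using ht
        · simpa [hij] using hxS i (by simp [hij, hi])
    convert convex_convexHull ℝ _ (hupd (ℓ j) (by simp)) (hupd (u j) (by simp)) ha hb hab using 1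
    ext i
    · rcases eq_or_ne i j with rfl | hij
      · simp [← hxj]
      · simp [hij, ← add_mul, hab]
    · have := hαβ (x j)
      simp only [update_eq_self] at this
      simp only [Prod.snd_add, Prod.smul_snd, smul_eq_mul, hαβ, this, ← hxj]
      linear_combination (-α) * hab

theorem mPoly_update_affine (n : ℕ) (c : ℕ → ℝ) (x : Fin n → ℝ) (j : Fin n) :
    ∃ a b : ℝ, ∀ t, mPoly n c (update x j t) = a + b * t := by
  have hprod : ∀ (J : Finset (Fin n)) t, ∏ k ∈ J, update x j t k =
      (if j ∈ J then 0 else ∏ k ∈ J, x k) + (if j ∈ J then ∏ k ∈ J \ {j}, x k else 0) * t := by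
    intro J t
    split_ifs with h
    · simp [prod_update_of_mem h, mul_comm]
    · simp [prod_update_of_notMem h]
  refine ⟨∑ i ∈ Icc 2 n, c i * ∑ J ∈ powersetCard i univ, if j ∈ J then 0 else ∏ k ∈ J, x k,
    ∑ i ∈ Icc 2 n, c i * ∑ J ∈ powersetCard i univ, if j ∈ J then ∏ k ∈ J \ {j}, x k else 0,
    fun t => ?_⟩
  simp only [mPoly, hprod, sum_add_distrib, mul_add, sum_mul, mul_assoc]

theorem mPoly_comp_perm (n : ℕ) (c : ℕ → ℝ) (x : Fin n → ℝ) (σ : Equiv.Perm (Fin n)) :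
    mPoly n c (x ∘ σ) = mPoly n c x := by
  refine sum_congr rfl fun i _ => congrArg (c i * ·) ?_
  conv_rhs => rw [← map_univ_equiv σ, powersetCard_map, sum_map]
  simp [mapEmbedding_apply, prod_map]

theorem xpt_zero (n : ℕ) (ℓ u : ℝ) : xpt n ℓ u 0 = fun _ => ℓ := by
  ext j
  simp [xpt]

theorem xpt_self (n : ℕ) (ℓ u : ℝ) : xpt n ℓ u n = fun _ => u := by
  ext j
  simp [xpt]

theorem antitone_xpt {n : ℕ} {ℓ u : ℝ} (h : ℓ ≤ u) (k : ℕ) : Antitone (xpt n ℓ u k) := by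
  intro i j hij
  simp only [xpt]
  split_ifs <;> first | exact le_rfl | exact h | omega

theorem xpt_mem_Xbox {n : ℕ} {ℓ u : ℝ} (h : ℓ ≤ u) (k : ℕ) : xpt n ℓ u k ∈ Xbox n ℓ u := by
  intro j
  simp only [xpt]
  split_ifs <;> simp [h]

theorem exists_eq_xpt_comp_perm {n : ℕ} {ℓ u : ℝ} {v : Fin n → ℝ}
    (hv : v ∈ univ.pi fun _ => ({ℓ, u} : Set ℝ)) :
    ∃ k ≤ n, ∃ σ : Equiv.Perm (Fin n), v = xpt n ℓ u k ∘ σ := by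
  set k := Fintype.card {j // v j = u}
  have hk : k ≤ n := by simpa using Fintype.card_subtype_le (fun j => v j = u)
  have hcard : k = Fintype.card {j : Fin n // (j : ℕ) < k} := by
    rw [Fintype.card_subtype (fun j : Fin n => (j : ℕ) < k), Fin.card_filter_val_lt,
      min_eq_right hk]
  let σ := (Fintype.equivOfCardEq hcard).extendSubtype
  refine ⟨k, hk, σ, funext fun j => ?_⟩
  by_cases hj : v j = u
  · have hσj := Equiv.extendSubtype_mem (Fintype.equivOfCardEq hcard) j hj
    simp [xpt, hj, σ, hσj]
  · have hσj := Equiv.extendSubtype_not_mem (Fintype.equivOfCardEq hcard) j hj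
    have : v j = ℓ := by simpa [hj] using hv j trivial
    simp [xpt, this, σ, hσj]

noncomputable def ineqLhsAffine (n : ℕ) (β₀ : ℝ) (β : Fin n → ℝ) (β' : ℝ) :
    ((Fin n → ℝ) × ℝ) →ᵃ[ℝ] ℝ where
  toFun := ineqLhs n β₀ β β'
  linear := (∑ j, β j • LinearMap.proj j) ∘ₗ LinearMap.fst ℝ _ _ + β' • LinearMap.snd ℝ _ _
  map_vadd' p v := by
    simp [ineqLhs, sum_add_distrib, mul_add, add_comm, add_left_comm, add_assoc]

def vertexGraph (n : ℕ) (ℓ u : ℝ) (c : ℕ → ℝ) : Set ((Fin n → ℝ) × ℝ) :=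
  (fun v => (v, mPoly n c v)) '' univ.pi fun _ => {ℓ, u}

section Facet

variable {n : ℕ} {ℓ u : ℝ} {c : ℕ → ℝ} {β₀ : ℝ} {β : Fin n → ℝ} {β' : ℝ}

theorem ineqLhs_vtx_le_comp_perm (hlu : ℓ ≤ u) (hβ : Monotone β) (k : ℕ)
    (σ : Equiv.Perm (Fin n)) :
    ineqLhs n β₀ β β' (vtx n ℓ u c k) ≤
      ineqLhs n β₀ β β' (xpt n ℓ u k ∘ σ, mPoly n c (xpt n ℓ u k ∘ σ)) := by
  have := (hβ.antivary (antitone_xpt hlu k)).sum_mul_le_sum_mul_comp_perm (σ := σ)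
  simp only [ineqLhs, vtx, mval, mPoly_comp_perm, comp_apply]
  linarith

theorem exists_exactAt_vtx_of_mem_vertexGraph (hlu : ℓ ≤ u) (hβ : Monotone β)
    (hvalid : IsValid n ℓ u c β₀ β β') {q : (Fin n → ℝ) × ℝ} (hq : q ∈ vertexGraph n ℓ u c)
    (hq0 : ExactAt n β₀ β β' q) :
    ∃ k ≤ n, ∃ σ : Equiv.Perm (Fin n), q = (xpt n ℓ u k ∘ σ, mPoly n c (xpt n ℓ u k ∘ σ)) ∧
      ExactAt n β₀ β β' (vtx n ℓ u c k) := by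
  obtain ⟨v, hv, rfl⟩ := hq
  obtain ⟨k, hk, σ, rfl⟩ := exists_eq_xpt_comp_perm hv
  refine ⟨k, hk, σ, rfl, le_antisymm ?_ ?_⟩
  · exact hq0 ▸ ineqLhs_vtx_le_comp_perm hlu hβ k σ
  · exact hvalid _ (subset_convexHull ℝ _ ⟨xpt_mem_Xbox hlu k, rfl⟩)

theorem IsFacet.le_finrank_vectorSpan (hlu : ℓ ≤ u) (hvalid : IsValid n ℓ u c β₀ β β')
    (hfacet : IsFacet n ℓ u c β₀ β β') :
    n ≤ finrank ℝ (vectorSpan ℝ {q ∈ vertexGraph n ℓ u c | ExactAt n β₀ β β' q}) := by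
  obtain ⟨pts, hind, hpts⟩ := hfacet
  have hG : convexHull ℝ (Gset n ℓ u c) ⊆ convexHull ℝ (vertexGraph n ℓ u c) := by
    refine convexHull_min ?_ (convex_convexHull ℝ _)
    rintro p ⟨hx, hy⟩
    rw [← Prod.mk.eta (p := p), hy]
    exact mk_mem_convexHull_image_pi (mPoly_update_affine n c) hx
  have hV : vertexGraph n ℓ u c ⊆ Gset n ℓ u c := by
    rintro _ ⟨v, hv, rfl⟩
    refine ⟨fun j => ?_, rfl⟩
    obtain h | h : v j = ℓ ∨ v j = u := hv j trivial <;> simp [h, hlu]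
  have hface : range pts ⊆ convexHull ℝ {q ∈ vertexGraph n ℓ u c | ExactAt n β₀ β β' q} := by
    rintro _ ⟨i, rfl⟩
    exact mem_convexHull_sep_of_apply_eq_zero (ineqLhsAffine n β₀ β β')
      (fun q hq => hvalid q (subset_convexHull ℝ _ (hV hq))) (hG (hpts i).1) (hpts i).2
  calc n = finrank ℝ (vectorSpan ℝ (range pts)) := (hind.finrank_vectorSpan (by simp)).symm
    _ ≤ _ := Submodule.finrank_mono (vectorSpan_mono ℝ hface)
    _ = _ := by rw [vectorSpan_convexHull]

theorem IsFacet.exists_exactAt_vtx_between (hn : 2 ≤ n) (hlu : ℓ ≤ u) (hβ : Monotone β)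
    (hvalid : IsValid n ℓ u c β₀ β β') (hfacet : IsFacet n ℓ u c β₀ β β') :
    ∃ k, 1 ≤ k ∧ k ≤ n - 1 ∧ ExactAt n β₀ β β' (vtx n ℓ u c k) := by
  by_contra! h
  have hW : {q ∈ vertexGraph n ℓ u c | ExactAt n β₀ β β' q} ⊆
      {vtx n ℓ u c 0, vtx n ℓ u c n} := by
    rintro q ⟨hq, hq0⟩
    obtain ⟨k, hk, σ, rfl, hk0⟩ := exists_exactAt_vtx_of_mem_vertexGraph hlu hβ hvalid hq hq0
    obtain rfl | rfl : k = 0 ∨ k = n := by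
      by_contra! h'
      exact h k (by omega) (by omega) hk0
    · left
      simp [vtx, mval, xpt_zero, comp_def]
    · right
      simp [vtx, mval, xpt_self, comp_def]
  have h₁ := hfacet.le_finrank_vectorSpan hlu hvalid
  have h₂ := Submodule.finrank_mono (vectorSpan_mono ℝ hW)
  have h₃ := collinear_iff_finrank_le_one.mp (collinear_pair ℝ (vtx n ℓ u c 0) (vtx n ℓ u c n))
  omega

theorem IsFacet.exists_exactAt_vtx_ne (hn : 1 ≤ n) (hlu : ℓ ≤ u) (hβ : Monotone β)
    (hvalid : IsValid n ℓ u c β₀ β β') (hfacet : IsFacet n ℓ u c β₀ β β') (k₁ : ℕ) :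
    ∃ k ≤ n, k ≠ k₁ ∧ ExactAt n β₀ β β' (vtx n ℓ u c k) := by
  by_contra! h
  let ψ : ((Fin n → ℝ) × ℝ) →ₗ[ℝ] ℝ × ℝ := LinearMap.prodMap (∑ j, LinearMap.proj j) LinearMap.id
  have hψ : ∀ p, ψ p = (∑ j, p.1 j, p.2) := by simp [ψ]
  have hsurj : Surjective ψ := fun ⟨a, b⟩ => ⟨(Pi.single ⟨0, hn⟩ a, b), by simp [hψ]⟩
  have hW : {q ∈ vertexGraph n ℓ u c | ExactAt n β₀ β β' q} ⊆ ψ ⁻¹' {ψ (vtx n ℓ u c k₁)} := by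
    rintro q ⟨hq, hq0⟩
    obtain ⟨k, hk, σ, rfl, hk0⟩ := exists_exactAt_vtx_of_mem_vertexGraph hlu hβ hvalid hq hq0
    obtain rfl : k = k₁ := by
      by_contra h'
      exact h k hk h' hk0
    simp [hψ, vtx, mval, mPoly_comp_perm, Equiv.sum_comp]
  have h₁ := hfacet.le_finrank_vectorSpan hlu hvalid
  have h₂ := Submodule.finrank_mono (vectorSpan_mono ℝ hW)
  have h₃ := finrank_vectorSpan_preimage_add_finrank_le ψ hsurj (ψ (vtx n ℓ u c k₁))
  simp only [finrank_prod, finrank_self, finrank_fin_fun] at h₃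
  omega

end Facet

/-- A core facet is satisfied exactly at `(x^k, m(x^k))` for at least
two indices `k ∈ {0,…,n}`, at least one of which lies in `{1,…,n-1}`. -/
theorem stmt4 (n : ℕ) (hn : 2 ≤ n) (ℓ u : ℝ) (hlu : ℓ < u) (c : ℕ → ℝ)
    (β₀ : ℝ) (β : Fin n → ℝ) (β' : ℝ)
    (hcore : IsCore n β β') (hvalid : IsValid n ℓ u c β₀ β β')
    (hfacet : IsFacet n ℓ u c β₀ β β') :
    ∃ k₁ k₂, k₁ ≤ n ∧ k₂ ≤ n ∧ k₁ ≠ k₂ ∧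
      ExactAt n β₀ β β' (vtx n ℓ u c k₁) ∧ ExactAt n β₀ β β' (vtx n ℓ u c k₂) ∧
      ((1 ≤ k₁ ∧ k₁ ≤ n - 1) ∨ (1 ≤ k₂ ∧ k₂ ≤ n - 1)) := by
  obtain ⟨-, hβ⟩ := hcore
  obtain ⟨k₁, hk₁, hk₁n, h₁⟩ := hfacet.exists_exactAt_vtx_between hn hlu.le hβ hvalid
  obtain ⟨k₂, hk₂, hne, h₂⟩ := hfacet.exists_exactAt_vtx_ne (by omega) hlu.le hβ hvalid k₁
  exact ⟨k₁, k₂, by omega, hk₂, hne.symm, h₁, h₂, Or.inl ⟨hk₁, hk₁n⟩⟩
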